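/- For all l ∈ n_l and m ∈ n_b, the partial derivative of the from-end complex line flow S^fr_l with respect to the angle θ_m exists and equals j·( C_{l m}·V_m·conj(I^fr_l) − (Σ_k C_{l k}·V_k)·conj((Y_f)_{l m})·conj(V_m) ); i.e. the one-variable function t ↦ S^fr_l computed from the angle vector obtained by replacing θ_m with t has this derivative at t = θ_m. -/

import Mathlib

open Matrix

/-- Complex bus voltage `V_k = v_k · exp(j θ_k)`. -/
noncomputable def busV {nb : Type*} (v θ : nb → ℝ) (k : nb) : ℂ :=
  (v k : ℂ) * Complex.exp (Complex.I * (θ k : ℂ))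

/-- From-end line current `I^fr_l = Σ_k (Y_f)_{l k} V_k`. -/
noncomputable def lineIfr {nl nb : Type*} [Fintype nb] (Yf : Matrix nl nb ℂ)
    (v θ : nb → ℝ) (l : nl) : ℂ :=
  ∑ k, Yf l k * busV v θ k

/-- From-end complex line flow `S^fr_l = (Σ_k C_{l k} V_k) · conj(I^fr_l)`. -/
noncomputable def lineSfr {nl nb : Type*} [Fintype nb] (C Yf : Matrix nl nb ℂ)
    (v θ : nb → ℝ) (l : nl) : ℂ :=
  (∑ k, C l k * busV v θ k) * (starRingEnd ℂ) (lineIfr Yf v θ l)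

/-! Among the bus voltages only `V_m` depends on `θ_m`, with `∂V_m/∂θ_m = j V_m`; the product
rule and `conj j = -j` then give the formula. -/

section AngleDerivative

variable {nb : Type*} [DecidableEq nb] (v θ : nb → ℝ) (m : nb)

theorem hasDerivAt_busV_update (k : nb) :
    HasDerivAt (fun t : ℝ => busV v (Function.update θ m t) k)
      (Pi.single (M := fun _ => ℂ) m (Complex.I * busV v θ m) k) (θ m) := by
  have hθ := hasDerivAt_pi.1 (hasDerivAt_update θ m (θ m)) k
  refine (((hθ.ofReal_comp).const_mul Complex.I).cexp.const_mul (v k : ℂ)).congr_deriv ?_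
  rcases eq_or_ne k m with rfl | hk
  · simp only [Function.update_eq_self, Pi.single_eq_same, Complex.ofReal_one, busV]
    ring
  · simp [Pi.single_eq_of_ne hk]

theorem hasDerivAt_sum_mul_busV_update [Fintype nb] (w : nb → ℂ) :
    HasDerivAt (fun t : ℝ => ∑ k, w k * busV v (Function.update θ m t) k)
      (w m * (Complex.I * busV v θ m)) (θ m) :=
  (HasDerivAt.fun_sum fun k _ => (hasDerivAt_busV_update v θ m k).const_mul (w k)).congr_deriv
    (by simp [Pi.single_apply])

end AngleDerivative

/-- Partial derivative of the from-end complex line flow `S^fr_l` with respect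
to the voltage angle `θ_m`. -/
theorem hasDerivAt_lineSfr_angle {nl nb : Type*} [Fintype nb] [DecidableEq nb]
    (C Yf : Matrix nl nb ℂ) (v θ : nb → ℝ) (l : nl) (m : nb) :
    HasDerivAt (fun t : ℝ => lineSfr C Yf v (Function.update θ m t) l)
      (Complex.I *
        (C l m * busV v θ m * (starRingEnd ℂ) (lineIfr Yf v θ l)
          - (∑ k, C l k * busV v θ k) * (starRingEnd ℂ) (Yf l m) *
              (starRingEnd ℂ) (busV v θ m)))
      (θ m) := by
  have hV := hasDerivAt_sum_mul_busV_update v θ m (C l)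
  have hI := (hasDerivAt_sum_mul_busV_update v θ m (Yf l)).star
  refine (hV.mul hI).congr_deriv ?_
  simp only [Function.update_eq_self, Complex.star_def, map_mul, Complex.conj_I, lineIfr]
  ring
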